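/- arXiv:1908.07882 — 5 statements merged into one kernel-verified Lean document; each statement's English description precedes it below -/
import Mathlib

section
/- Let μ and ν be probability measures on a measurable space Θ, let ε ≥ 0, and suppose μ(O) ≤ e^ε · ν(O) for every measurable set O ⊆ Θ. Then for every measurable function f : Θ → ℝ with 0 ≤ f(θ) ≤ b for all θ (where b ≥ 0), one has ∫ f dμ − ∫ f dν ≤ b·(e^ε − 1). -/
open MeasureTheory Real

/-! Domination `μ ≤ e^ε • ν` of measures integrates to `∫ f dμ ≤ e^ε ∫ f dν` for `f ≥ 0`, so the
gap is at most `(e^ε - 1) ∫ f dν`, and `∫ f dν ≤ b` because `ν` is a probability measure. -/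

theorem MeasureTheory.integral_le_toReal_mul_integral_of_le_smul {α : Type*} [MeasurableSpace α]
    {μ ν : Measure α} {c : ENNReal} (hc : c ≠ ⊤) (hμν : μ ≤ c • ν) {f : α → ℝ}
    (hf0 : 0 ≤ᵐ[ν] f) (hfi : Integrable f ν) :
    ∫ x, f x ∂μ ≤ c.toReal * ∫ x, f x ∂ν :=
  calc ∫ x, f x ∂μ ≤ ∫ x, f x ∂(c • ν) :=
        integral_mono_measure hμν (Measure.ae_smul_measure hf0 c) (hfi.smul_measure hc)
    _ = c.toReal * ∫ x, f x ∂ν := integral_smul_measure f c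

theorem MeasureTheory.integral_le_of_le_const {α : Type*} [MeasurableSpace α]
    {ν : Measure α} [IsProbabilityMeasure ν] {f : α → ℝ} {b : ℝ}
    (hfi : Integrable f ν) (hfb : ∀ x, f x ≤ b) :
    ∫ x, f x ∂ν ≤ b := by
  simpa using integral_mono hfi (integrable_const b) hfb

theorem dp_implies_expectation_gap_general {Θ : Type*} [MeasurableSpace Θ]
    (μ ν : Measure Θ) [IsProbabilityMeasure ν]
    (ε : ℝ) (hε : 0 ≤ ε)
    (hdp : ∀ O : Set Θ, MeasurableSet O → μ O ≤ ENNReal.ofReal (exp ε) * ν O)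
    (b : ℝ) (f : Θ → ℝ) (hf : Measurable f)
    (hf0 : ∀ θ, 0 ≤ f θ) (hfb : ∀ θ, f θ ≤ b) :
    ∫ θ, f θ ∂μ - ∫ θ, f θ ∂ν ≤ b * (exp ε - 1) := by
  have hμν : μ ≤ ENNReal.ofReal (exp ε) • ν :=
    Measure.le_iff.mpr fun O hO => by simpa using hdp O hO
  have hfi : Integrable f ν :=
    Integrable.of_bound hf.aestronglyMeasurable b
      (ae_of_all _ fun θ => by simpa [abs_of_nonneg (hf0 θ)] using hfb θ)
  have hμ := integral_le_toReal_mul_integral_of_le_smul ENNReal.ofReal_ne_top hμν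
    (ae_of_all _ hf0) hfi
  rw [ENNReal.toReal_ofReal (exp_nonneg ε)] at hμ
  have hνb : ∫ θ, f θ ∂ν ≤ b := integral_le_of_le_const hfi hfb
  have hexp : 1 ≤ exp ε := one_le_exp hε
  nlinarith

/-- If `μ(O) ≤ e^ε · ν(O)` for every measurable `O` (one-sided
ε-differential privacy between the two output distributions), then for any
measurable `f` with `0 ≤ f ≤ b`, `∫ f dμ − ∫ f dν ≤ b · (e^ε − 1)`. -/
theorem dp_implies_expectation_gap {Θ : Type*} [MeasurableSpace Θ]
    (μ ν : Measure Θ) [IsProbabilityMeasure μ] [IsProbabilityMeasure ν]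
    (ε : ℝ) (hε : 0 ≤ ε)
    (hdp : ∀ O : Set Θ, MeasurableSet O → μ O ≤ ENNReal.ofReal (exp ε) * ν O)
    (b : ℝ) (hb : 0 ≤ b) (f : Θ → ℝ) (hf : Measurable f)
    (hf0 : ∀ θ, 0 ≤ f θ) (hfb : ∀ θ, f θ ≤ b) :
    ∫ θ, f θ ∂μ - ∫ θ, f θ ∂ν ≤ b * (exp ε - 1) :=
  dp_implies_expectation_gap_general μ ν ε hε hdp b f hf hf0 hfb
end

section
/- If a randomized algorithm A is ε-differentially private and the loss ℓ : Θ × X → ℝ is measurable with 0 ≤ ℓ(θ,x) ≤ 1 for all θ, x, then A is uniform RO-stable with rate e^ε − 1; that is, for all adjacent datasets S, S' ∈ X^m and all x ∈ X, |E_{θ~A(S)} ℓ(θ,x) − E_{θ~A(S')} ℓ(θ,x)| ≤ e^ε − 1. -/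
/-! Differential privacy says exactly that the output laws `μ, ν` on adjacent datasets satisfy
`μ ≤ e^ε • ν` as measures, in both directions. For `0 ≤ f ≤ 1` this gives
`∫ f ∂μ ≤ e^ε ∫ f ∂ν`, and since `e^ε ≥ 1` (compare total masses) and `∫ f ∂ν ≤ 1`,
`∫ f ∂μ - ∫ f ∂ν ≤ (e^ε - 1) ∫ f ∂ν ≤ e^ε - 1`. -/

open MeasureTheory Real

/-- Two datasets of size `m` are adjacent if they differ in at most one entry. -/
def Adjacent {X : Type*} {m : ℕ} (S S' : Fin m → X) : Prop :=
  ∃ i : Fin m, ∀ j : Fin m, j ≠ i → S j = S' j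

theorem Adjacent.symm {X : Type*} {m : ℕ} {S S' : Fin m → X} (h : Adjacent S S') :
    Adjacent S' S := by
  obtain ⟨i, hi⟩ := h
  exact ⟨i, fun j hj => (hi j hj).symm⟩

section Domination

variable {Θ : Type*} [MeasurableSpace Θ] {μ ν : Measure Θ}

theorem one_le_of_le_ofReal_smul [IsProbabilityMeasure μ] [IsProbabilityMeasure ν] {c : ℝ}
    (h : μ ≤ ENNReal.ofReal c • ν) : 1 ≤ c := by
  simpa using h Set.univ

theorem integral_le_mul_integral_of_le_ofReal_smul {c : ℝ} (hc : 0 ≤ c)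
    (h : μ ≤ ENNReal.ofReal c • ν) {f : Θ → ℝ} (hf : Integrable f ν) (h0 : 0 ≤ f) :
    ∫ θ, f θ ∂μ ≤ c * ∫ θ, f θ ∂ν :=
  calc ∫ θ, f θ ∂μ ≤ ∫ θ, f θ ∂(ENNReal.ofReal c • ν) :=
        integral_mono_measure h (.of_forall h0) (hf.smul_measure ENNReal.ofReal_ne_top)
    _ = c * ∫ θ, f θ ∂ν := by
        rw [integral_smul_measure, ENNReal.toReal_ofReal hc, smul_eq_mul]

theorem integral_sub_integral_le_of_le_ofReal_smul [IsProbabilityMeasure μ]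
    [IsProbabilityMeasure ν] {c : ℝ} (h : μ ≤ ENNReal.ofReal c • ν) {f : Θ → ℝ}
    (hf : AEStronglyMeasurable f ν) (h0 : ∀ θ, 0 ≤ f θ) (h1 : ∀ θ, f θ ≤ 1) :
    ∫ θ, f θ ∂μ - ∫ θ, f θ ∂ν ≤ c - 1 := by
  have hc : 1 ≤ c := one_le_of_le_ofReal_smul h
  have hint : Integrable f ν :=
    .of_bound hf 1 (.of_forall fun θ => by rw [norm_of_nonneg (h0 θ)]; exact h1 θ)
  have hν1 : ∫ θ, f θ ∂ν ≤ 1 := by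
    simpa using integral_mono hint (integrable_const (μ := ν) (1 : ℝ)) h1
  calc ∫ θ, f θ ∂μ - ∫ θ, f θ ∂ν
      ≤ c * ∫ θ, f θ ∂ν - ∫ θ, f θ ∂ν := by
        gcongr
        exact integral_le_mul_integral_of_le_ofReal_smul (by linarith) h hint h0
    _ = (c - 1) * ∫ θ, f θ ∂ν := by ring
    _ ≤ c - 1 := mul_le_of_le_one_right (by linarith) hν1

end Domination

theorem dp_implies_uniform_RO_stability_general {X Θ : Type*} [MeasurableSpace X]
    [MeasurableSpace Θ] {m : ℕ}
    (A : (Fin m → X) → Measure Θ) (hprob : ∀ S, IsProbabilityMeasure (A S))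
    (ε : ℝ)
    (hdp : ∀ S S' : Fin m → X, Adjacent S S' → ∀ O : Set Θ, MeasurableSet O →
      A S O ≤ ENNReal.ofReal (exp ε) * A S' O)
    (ℓ : Θ → X → ℝ) (hmeas : Measurable (Function.uncurry ℓ))
    (h0 : ∀ θ x, 0 ≤ ℓ θ x) (h1 : ∀ θ x, ℓ θ x ≤ 1) :
    ∀ S S' : Fin m → X, Adjacent S S' → ∀ x : X,
      |(∫ θ, ℓ θ x ∂(A S)) - ∫ θ, ℓ θ x ∂(A S')| ≤ exp ε - 1 := by
  intro S S' hadj x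
  have := hprob S
  have := hprob S'
  have hdom : ∀ {T T'}, Adjacent T T' → A T ≤ ENNReal.ofReal (exp ε) • A T' :=
    fun hTT' => Measure.le_iff.2 fun O hO => by simpa using hdp _ _ hTT' O hO
  have hf : Measurable fun θ => ℓ θ x := hmeas.comp measurable_prodMk_right
  rw [abs_sub_le_iff]
  exact ⟨integral_sub_integral_le_of_le_ofReal_smul (hdom hadj) hf.aestronglyMeasurable
      (h0 · x) (h1 · x),
    integral_sub_integral_le_of_le_ofReal_smul (hdom hadj.symm) hf.aestronglyMeasurable
      (h0 · x) (h1 · x)⟩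

/-- Lemma 1 of the paper: if a randomized algorithm `A` is
ε-differentially private and the loss `ℓ` is measurable with values in `[0,1]`,
then `A` is uniform RO-stable with rate `e^ε − 1`. -/
theorem dp_implies_uniform_RO_stability {X Θ : Type*} [MeasurableSpace X]
    [MeasurableSpace Θ] {m : ℕ}
    (A : (Fin m → X) → Measure Θ) (hprob : ∀ S, IsProbabilityMeasure (A S))
    (ε : ℝ) (hε : 0 ≤ ε)
    (hdp : ∀ S S' : Fin m → X, Adjacent S S' → ∀ O : Set Θ, MeasurableSet O →
      A S O ≤ ENNReal.ofReal (exp ε) * A S' O)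
    (ℓ : Θ → X → ℝ) (hmeas : Measurable (Function.uncurry ℓ))
    (h0 : ∀ θ x, 0 ≤ ℓ θ x) (h1 : ∀ θ x, ℓ θ x ≤ 1) :
    ∀ S S' : Fin m → X, Adjacent S S' → ∀ x : X,
      |(∫ θ, ℓ θ x ∂(A S)) - ∫ θ, ℓ θ x ∂(A S')| ≤ exp ε - 1 :=
  dp_implies_uniform_RO_stability_general A hprob ε hdp ℓ hmeas h0 h1
end

section
/- Let p be a probability measure on X, let A map datasets S ∈ X^m to probability measures on Θ (measurably in S), and let ℓ : Θ × X → ℝ be measurable with 0 ≤ ℓ(θ,x) ≤ 1 for all θ, x. If A is ε-differentially private, then the generalization gap satisfies |F(A)| ≤ e^ε − 1, where F(A) = E_{S~p^m} E_{θ~A(S)} [ (1/m)∑_{i=1}^m ℓ(θ, x_i) − E_{x~p} ℓ(θ,x) ]. -/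
open MeasureTheory ProbabilityTheory Real

section Aux

variable {α : Type*} [MeasurableSpace α]

lemma aux_integrable {μ : Measure α} [IsFiniteMeasure μ] {f : α → ℝ}
    (hf : AEStronglyMeasurable f μ) (h0 : ∀ a, 0 ≤ f a) (h1 : ∀ a, f a ≤ 1) :
    Integrable f μ :=
  (integrable_const 1).mono' hf (Filter.Eventually.of_forall fun a => by
    rw [Real.norm_eq_abs, abs_of_nonneg (h0 a)]; exact h1 a)

lemma aux_integral_le_one {μ : Measure α} [IsProbabilityMeasure μ] {f : α → ℝ}
    (hf : AEStronglyMeasurable f μ) (h0 : ∀ a, 0 ≤ f a) (h1 : ∀ a, f a ≤ 1) :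
    ∫ a, f a ∂μ ≤ 1 := by
  calc ∫ a, f a ∂μ ≤ ∫ _a, (1 : ℝ) ∂μ :=
        integral_mono (aux_integrable hf h0 h1) (integrable_const 1) h1
    _ = 1 := by simp

lemma aux_dp_diff {Θ : Type*} [MeasurableSpace Θ] {μ ν : Measure Θ}
    [IsProbabilityMeasure μ] [IsProbabilityMeasure ν] {ε : ℝ} (hε : 0 ≤ ε)
    (hle : ∀ O : Set Θ, MeasurableSet O → μ O ≤ ENNReal.ofReal (exp ε) * ν O)
    {f : Θ → ℝ} (hf : Measurable f) (h0 : ∀ θ, 0 ≤ f θ) (h1 : ∀ θ, f θ ≤ 1) :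
    ∫ θ, f θ ∂μ - ∫ θ, f θ ∂ν ≤ exp ε - 1 := by
  have hμν : μ ≤ ENNReal.ofReal (exp ε) • ν := by
    refine Measure.le_iff.2 fun s hs => ?_
    simpa [Measure.smul_apply, smul_eq_mul] using hle s hs
  have hfin : ∫⁻ θ, ENNReal.ofReal (f θ) ∂ν ≤ 1 := by
    calc ∫⁻ θ, ENNReal.ofReal (f θ) ∂ν ≤ ∫⁻ _θ, 1 ∂ν :=
          lintegral_mono fun θ => ENNReal.ofReal_le_one.2 (h1 θ)
      _ = 1 := by simp
  have l1 : ∫⁻ θ, ENNReal.ofReal (f θ) ∂μ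
      ≤ ENNReal.ofReal (exp ε) * ∫⁻ θ, ENNReal.ofReal (f θ) ∂ν := by
    calc ∫⁻ θ, ENNReal.ofReal (f θ) ∂μ
        ≤ ∫⁻ θ, ENNReal.ofReal (f θ) ∂(ENNReal.ofReal (exp ε) • ν) :=
          lintegral_mono' hμν le_rfl
      _ = _ := lintegral_smul_measure _ _
  have hμeq : ∫ θ, f θ ∂μ = (∫⁻ θ, ENNReal.ofReal (f θ) ∂μ).toReal :=
    integral_eq_lintegral_of_nonneg_ae (Filter.Eventually.of_forall h0)
      hf.aestronglyMeasurable
  have hνeq : ∫ θ, f θ ∂ν = (∫⁻ θ, ENNReal.ofReal (f θ) ∂ν).toReal :=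
    integral_eq_lintegral_of_nonneg_ae (Filter.Eventually.of_forall h0)
      hf.aestronglyMeasurable
  have hνtop : ∫⁻ θ, ENNReal.ofReal (f θ) ∂ν ≠ ⊤ :=
    (lt_of_le_of_lt hfin (by norm_num)).ne
  have l2 : ∫ θ, f θ ∂μ ≤ exp ε * ∫ θ, f θ ∂ν := by
    rw [hμeq, hνeq]
    calc (∫⁻ θ, ENNReal.ofReal (f θ) ∂μ).toReal
        ≤ (ENNReal.ofReal (exp ε) * ∫⁻ θ, ENNReal.ofReal (f θ) ∂ν).toReal :=
          ENNReal.toReal_mono (ENNReal.mul_ne_top ENNReal.ofReal_ne_top hνtop) l1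
      _ = exp ε * (∫⁻ θ, ENNReal.ofReal (f θ) ∂ν).toReal := by
          rw [ENNReal.toReal_mul, ENNReal.toReal_ofReal (exp_pos ε).le]
  have hν0 : 0 ≤ ∫ θ, f θ ∂ν := integral_nonneg h0
  have hν1 : ∫ θ, f θ ∂ν ≤ 1 := aux_integral_le_one hf.aestronglyMeasurable h0 h1
  have hexp : 1 ≤ exp ε := Real.one_le_exp hε
  nlinarith

/-- The involutive measurable equivalence `(S, x) ↦ (update S i x, S i)`. -/
def updateSwapEquiv {X : Type*} [MeasurableSpace X] {m : ℕ} (i : Fin m) :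
    ((Fin m → X) × X) ≃ᵐ ((Fin m → X) × X) where
  toFun q := (Function.update q.1 i q.2, q.1 i)
  invFun q := (Function.update q.1 i q.2, q.1 i)
  left_inv q := by
    ext <;> simp [Function.update_idem, Function.update_eq_self]
  right_inv q := by
    ext <;> simp [Function.update_idem, Function.update_eq_self]
  measurable_toFun :=
    measurable_update'.prodMk ((measurable_pi_apply i).comp measurable_fst)
  measurable_invFun :=
    measurable_update'.prodMk ((measurable_pi_apply i).comp measurable_fst)

lemma aux_measurePreserving {X : Type*} [MeasurableSpace X] (p : Measure X)
    [IsProbabilityMeasure p] {n : ℕ} (i : Fin (n + 1)) :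
    MeasurePreserving (updateSwapEquiv (X := X) i)
      ((Measure.pi fun _ : Fin (n + 1) => p).prod p)
      ((Measure.pi fun _ : Fin (n + 1) => p).prod p) := by
  classical
  set πm : Measure (Fin (n + 1) → X) := Measure.pi fun _ => p with hπm
  set πn : Measure (Fin n → X) := Measure.pi fun _ => p with hπn
  set e : (Fin (n + 1) → X) ≃ᵐ X × (Fin n → X) :=
    MeasurableEquiv.piFinSuccAbove (fun _ : Fin (n + 1) => X) i with he_def
  have he : MeasurePreserving e πm (p.prod πn) :=
    measurePreserving_piFinSuccAbove (fun _ => p) i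
  have hid : MeasurePreserving (id : X → X) p p := MeasurePreserving.id p
  have h1 : MeasurePreserving (Prod.map e (id : X → X)) (πm.prod p) ((p.prod πn).prod p) :=
    he.prod hid
  have h2 : MeasurePreserving (MeasurableEquiv.prodAssoc : (X × (Fin n → X)) × X ≃ᵐ _)
      ((p.prod πn).prod p) (p.prod (πn.prod p)) :=
    measurePreserving_prodAssoc p πn p
  have h3 : MeasurePreserving (Prod.swap : X × ((Fin n → X) × X) → _)
      (p.prod (πn.prod p)) ((πn.prod p).prod p) := Measure.measurePreserving_swap
  have h4 : MeasurePreserving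
      (Prod.map (Prod.swap : (Fin n → X) × X → X × (Fin n → X)) (id : X → X))
      ((πn.prod p).prod p) ((p.prod πn).prod p) := Measure.measurePreserving_swap.prod hid
  have h5 : MeasurePreserving (Prod.map e.symm (id : X → X))
      ((p.prod πn).prod p) (πm.prod p) := (he.symm e).prod hid
  have hcomp := h5.comp (h4.comp (h3.comp (h2.comp h1)))
  have hfun : (fun q : (Fin (n + 1) → X) × X => (Function.update q.1 i q.2, q.1 i)) =
      (Prod.map e.symm (id : X → X)) ∘ (Prod.map Prod.swap (id : X → X)) ∘ Prod.swap ∘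
        MeasurableEquiv.prodAssoc ∘ (Prod.map e (id : X → X)) := by
    funext q
    obtain ⟨S, x⟩ := q
    simp only [Function.comp_apply, Prod.map_apply, id_eq, MeasurableEquiv.prodAssoc,
      MeasurableEquiv.coe_mk, Equiv.prodAssoc_apply, Prod.swap_prod_mk, he_def,
      MeasurableEquiv.piFinSuccAbove_apply, MeasurableEquiv.piFinSuccAbove_symm_apply,
      Fin.insertNthEquiv, Equiv.coe_fn_mk, Equiv.coe_fn_symm_mk]
    rw [Fin.insertNth_removeNth]
  have : MeasurePreserving (fun q : (Fin (n + 1) → X) × X =>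
      (Function.update q.1 i q.2, q.1 i)) (πm.prod p) (πm.prod p) := by
    rw [hfun]; exact hcomp
  exact this

end Aux

/-- Theorem 1 of the paper: if the algorithm `A` (a Markov kernel from
datasets of size `m` to parameters) is ε-differentially private and the loss `ℓ` is
measurable with values in `[0,1]`, then the expected generalization gap
`F(A) = E_{S~p^m} E_{θ~A(S)} [ (1/m) ∑_i ℓ(θ, x_i) − E_{x~p} ℓ(θ,x) ]`
satisfies `|F(A)| ≤ exp ε − 1`. -/
theorem dp_implies_generalization {X Θ : Type*} [MeasurableSpace X]
    [MeasurableSpace Θ] (p : Measure X) [IsProbabilityMeasure p] {m : ℕ} (hm : 0 < m)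
    (A : Kernel (Fin m → X) Θ) [IsMarkovKernel A]
    (ε : ℝ) (hε : 0 ≤ ε)
    (hdp : ∀ S S' : Fin m → X, Adjacent S S' → ∀ O : Set Θ, MeasurableSet O →
      A S O ≤ ENNReal.ofReal (exp ε) * A S' O)
    (ℓ : Θ → X → ℝ) (hmeas : Measurable (Function.uncurry ℓ))
    (h0 : ∀ θ x, 0 ≤ ℓ θ x) (h1 : ∀ θ x, ℓ θ x ≤ 1) :
    |∫ S, ∫ θ, ((m : ℝ)⁻¹ * ∑ i : Fin m, ℓ θ (S i)) - ∫ x, ℓ θ x ∂p ∂(A S)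
        ∂(Measure.pi fun _ : Fin m => p)| ≤ exp ε - 1 := by
  classical
  obtain ⟨n, rfl⟩ : ∃ n, m = n + 1 := ⟨m - 1, (Nat.succ_pred_eq_of_pos hm).symm⟩
  set πm : Measure (Fin (n + 1) → X) := Measure.pi fun _ => p with hπm
  -- basic measurability facts
  have hmeas_x : ∀ x, Measurable fun θ => ℓ θ x := fun x =>
    hmeas.comp (measurable_id.prodMk measurable_const)
  have hIθ : ∀ (S : Fin (n + 1) → X) (x : X), Integrable (fun θ => ℓ θ x) (A S) :=
    fun S x => aux_integrable (hmeas_x x).aestronglyMeasurable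
      (fun θ => h0 θ x) (fun θ => h1 θ x)
  -- the population loss
  have hpop_sm : StronglyMeasurable fun θ => ∫ x, ℓ θ x ∂p :=
    hmeas.stronglyMeasurable.integral_prod_right
  have hmeas_θ : ∀ θ, Measurable fun x => ℓ θ x := fun θ =>
    hmeas.comp (measurable_const.prodMk measurable_id)
  have hpop0 : ∀ θ, 0 ≤ ∫ x, ℓ θ x ∂p := fun θ => integral_nonneg (h0 θ)
  have hpop1 : ∀ θ, ∫ x, ℓ θ x ∂p ≤ 1 := fun θ =>
    aux_integral_le_one (hmeas_θ θ).aestronglyMeasurable (h0 θ) (h1 θ)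
  have hIpop : ∀ S : Fin (n + 1) → X, Integrable (fun θ => ∫ x, ℓ θ x ∂p) (A S) :=
    fun S => aux_integrable hpop_sm.aestronglyMeasurable hpop0 hpop1
  -- `a i S` : empirical term; `b S` : population term
  set a : Fin (n + 1) → (Fin (n + 1) → X) → ℝ := fun i S => ∫ θ, ℓ θ (S i) ∂A S with ha_def
  set b : (Fin (n + 1) → X) → ℝ := fun S => ∫ θ, ∫ x, ℓ θ x ∂p ∂A S with hb_def
  have ha_sm : ∀ i, StronglyMeasurable (a i) := by
    intro i
    have : StronglyMeasurable fun q : (Fin (n + 1) → X) × Θ => ℓ q.2 (q.1 i) :=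
      (hmeas.comp (measurable_snd.prodMk ((measurable_pi_apply i).comp
        measurable_fst))).stronglyMeasurable
    exact this.integral_kernel_prod_right'
  have hb_sm : StronglyMeasurable b := by
    have : StronglyMeasurable fun q : (Fin (n + 1) → X) × Θ => ∫ x, ℓ q.2 x ∂p :=
      hpop_sm.comp_measurable measurable_snd
    exact this.integral_kernel_prod_right'
  have ha0 : ∀ i S, 0 ≤ a i S := fun i S => integral_nonneg fun θ => h0 θ (S i)
  have ha1 : ∀ i S, a i S ≤ 1 := fun i S =>
    aux_integral_le_one (hmeas_x (S i)).aestronglyMeasurable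
      (fun θ => h0 θ (S i)) (fun θ => h1 θ (S i))
  have hb0 : ∀ S, 0 ≤ b S := fun S => integral_nonneg hpop0
  have hb1 : ∀ S, b S ≤ 1 := fun S =>
    aux_integral_le_one hpop_sm.aestronglyMeasurable hpop0 hpop1
  have hIa : ∀ i, Integrable (a i) πm := fun i =>
    aux_integrable (ha_sm i).aestronglyMeasurable (ha0 i) (ha1 i)
  have hIb : Integrable b πm := aux_integrable hb_sm.aestronglyMeasurable hb0 hb1
  -- Step 1: inner rewrite
  have inner : ∀ S : Fin (n + 1) → X,
      ∫ θ, (((n : ℝ) + 1)⁻¹ * ∑ i : Fin (n + 1), ℓ θ (S i)) - ∫ x, ℓ θ x ∂p ∂(A S)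
        = ((n : ℝ) + 1)⁻¹ * ∑ i : Fin (n + 1), a i S - b S := by
    intro S
    have hsum : Integrable (fun θ => ∑ i : Fin (n + 1), ℓ θ (S i)) (A S) :=
      integrable_finset_sum _ fun i _ => hIθ S (S i)
    rw [integral_sub (hsum.const_mul _) (hIpop S), integral_const_mul,
      integral_finset_sum _ fun i _ => hIθ S (S i)]
  -- Step 2: outer rewrite
  have outer : ∫ S, (∫ θ, (((n : ℝ) + 1)⁻¹ * ∑ i : Fin (n + 1), ℓ θ (S i))
        - ∫ x, ℓ θ x ∂p ∂(A S)) ∂πm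
      = ((n : ℝ) + 1)⁻¹ * ∑ i : Fin (n + 1), (∫ S, a i S ∂πm) - ∫ S, b S ∂πm := by
    rw [integral_congr_ae (Filter.Eventually.of_forall inner)]
    have hsum : Integrable (fun S => ∑ i : Fin (n + 1), a i S) πm :=
      integrable_finset_sum _ fun i _ => hIa i
    rw [integral_sub (hsum.const_mul _) hIb, integral_const_mul,
      integral_finset_sum _ fun i _ => hIa i]
  -- Step 3: the key bound for each coordinate
  have key : ∀ i : Fin (n + 1), |∫ S, a i S ∂πm - ∫ S, b S ∂πm| ≤ exp ε - 1 := by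
    intro i
    set μ : Measure ((Fin (n + 1) → X) × X) := πm.prod p with hμ_def
    -- the three functions on the product space
    set k : (Fin (n + 1) → X) × X → ℝ := fun q => ∫ θ, ℓ θ q.2 ∂A q.1 with hk_def
    set h : (Fin (n + 1) → X) × X → ℝ :=
      fun q => ∫ θ, ℓ θ q.2 ∂A (Function.update q.1 i q.2) with hh_def
    have hk_sm : StronglyMeasurable k := by
      have hf : StronglyMeasurable fun r : ((Fin (n + 1) → X) × X) × Θ => ℓ r.2 r.1.2 :=
        (hmeas.comp (measurable_snd.prodMk measurable_fst.snd)).stronglyMeasurable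
      have := hf.integral_kernel_prod_right' (κ := Kernel.prodMkRight X A)
      simpa [Kernel.prodMkRight_apply, hk_def] using this
    have hh_sm : StronglyMeasurable h := by
      have hmap : Measurable fun q : (Fin (n + 1) → X) × X =>
          (Function.update q.1 i q.2, q.2) :=
        Measurable.prodMk (measurable_update' (a := i)) measurable_snd
      exact hk_sm.comp_measurable hmap
    have hk0 : ∀ q, 0 ≤ k q := fun q => integral_nonneg fun θ => h0 θ q.2
    have hk1 : ∀ q, k q ≤ 1 := fun q =>
      aux_integral_le_one (hmeas_x q.2).aestronglyMeasurable
        (fun θ => h0 θ q.2) (fun θ => h1 θ q.2)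
    have hh0 : ∀ q, 0 ≤ h q := fun q => integral_nonneg fun θ => h0 θ q.2
    have hh1 : ∀ q, h q ≤ 1 := fun q =>
      aux_integral_le_one (hmeas_x q.2).aestronglyMeasurable
        (fun θ => h0 θ q.2) (fun θ => h1 θ q.2)
    have hIk : Integrable k μ := aux_integrable hk_sm.aestronglyMeasurable hk0 hk1
    have hIh : Integrable h μ := aux_integrable hh_sm.aestronglyMeasurable hh0 hh1
    -- c1 : ∫ (a i ∘ fst) dμ = ∫ a i dπm
    have hIg : Integrable (fun q : (Fin (n + 1) → X) × X => a i q.1) μ :=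
      aux_integrable ((ha_sm i).comp_measurable measurable_fst).aestronglyMeasurable
        (fun q => ha0 i q.1) (fun q => ha1 i q.1)
    have c1 : ∫ q, a i q.1 ∂μ = ∫ S, a i S ∂πm := by
      rw [hμ_def, integral_prod _ hIg]
      simp
    -- c2 : ∫ h dμ = ∫ (a i ∘ fst) dμ  (measure-preserving swap)
    have hmp := aux_measurePreserving p i
    have c2 : ∫ q, h q ∂μ = ∫ q, a i q.1 ∂μ := by
      have := hmp.integral_comp' (fun q : (Fin (n + 1) → X) × X => a i q.1)
      rw [hμ_def] at *
      rw [← this]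
      refine integral_congr_ae (Filter.Eventually.of_forall fun q => ?_)
      simp only [updateSwapEquiv, MeasurableEquiv.coe_mk, Equiv.coe_fn_mk, ha_def, hh_def]
      rw [Function.update_self]
    -- c3 : ∫ k dμ = ∫ b dπm  (Fubini)
    have c3 : ∫ q, k q ∂μ = ∫ S, b S ∂πm := by
      rw [hμ_def, integral_prod _ hIk]
      refine integral_congr_ae (Filter.Eventually.of_forall fun S => ?_)
      have hswap : Integrable (Function.uncurry fun x θ => ℓ θ x) (p.prod (A S)) := by
        refine aux_integrable ?_ (fun q => h0 q.2 q.1) (fun q => h1 q.2 q.1)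
        exact (hmeas.comp measurable_swap).aestronglyMeasurable
      have := integral_integral_swap (f := fun x θ => ℓ θ x) (μ := p) (ν := A S) hswap
      simpa [hk_def, hb_def] using this
    -- c4 : pointwise DP bound
    have c4 : ∀ q : (Fin (n + 1) → X) × X, |h q - k q| ≤ exp ε - 1 := by
      intro q
      have hadj : Adjacent (Function.update q.1 i q.2) q.1 := by
        exact ⟨i, fun j hj => Function.update_of_ne hj _ _⟩
      have hadj' : Adjacent q.1 (Function.update q.1 i q.2) :=
        ⟨i, fun j hj => (Function.update_of_ne hj _ _).symm⟩
      have d1 : h q - k q ≤ exp ε - 1 :=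
        aux_dp_diff hε (hdp _ _ hadj) (hmeas_x q.2) (fun θ => h0 θ q.2) (fun θ => h1 θ q.2)
      have d2 : k q - h q ≤ exp ε - 1 :=
        aux_dp_diff hε (hdp _ _ hadj') (hmeas_x q.2) (fun θ => h0 θ q.2) (fun θ => h1 θ q.2)
      rw [abs_sub_le_iff]
      exact ⟨d1, d2⟩
    -- combine
    have : ∫ S, a i S ∂πm - ∫ S, b S ∂πm = ∫ q, (h q - k q) ∂μ := by
      rw [integral_sub hIh hIk, c2, c1, c3]
    rw [this]
    calc |∫ q, (h q - k q) ∂μ| ≤ ∫ q, |h q - k q| ∂μ := by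
          simpa [Real.norm_eq_abs] using
            norm_integral_le_integral_norm (μ := μ) (fun q => h q - k q)
      _ ≤ ∫ _q, (exp ε - 1) ∂μ := integral_mono (hIh.sub hIk).abs (integrable_const _)
          fun q => c4 q
      _ = exp ε - 1 := by simp
  -- put everything together
  push_cast
  rw [outer]
  have hM : ((n : ℝ) + 1) ≠ 0 := by positivity
  have hsplit : ((n : ℝ) + 1)⁻¹ * ∑ i : Fin (n + 1), (∫ S, a i S ∂πm) - ∫ S, b S ∂πm
      = ((n : ℝ) + 1)⁻¹ * ∑ i : Fin (n + 1), ((∫ S, a i S ∂πm) - ∫ S, b S ∂πm) := by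
    rw [Finset.sum_sub_distrib, Finset.sum_const, Finset.card_univ, Fintype.card_fin, nsmul_eq_mul]
    push_cast
    field_simp
  rw [hsplit, abs_mul, abs_of_nonneg (by positivity : (0:ℝ) ≤ ((n : ℝ) + 1)⁻¹)]
  calc ((n : ℝ) + 1)⁻¹ * |∑ i : Fin (n + 1), ((∫ S, a i S ∂πm) - ∫ S, b S ∂πm)|
      ≤ ((n : ℝ) + 1)⁻¹ * ∑ i : Fin (n + 1), |(∫ S, a i S ∂πm) - ∫ S, b S ∂πm| := by
        gcongr
        exact Finset.abs_sum_le_sum_abs _ _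
    _ ≤ ((n : ℝ) + 1)⁻¹ * ∑ _i : Fin (n + 1), (exp ε - 1) := by
        gcongr with i
        · exact key i
    _ = exp ε - 1 := by
        rw [Finset.sum_const, Finset.card_univ, Fintype.card_fin, nsmul_eq_mul]
        push_cast
        field_simp
end

section
/- Let A map datasets S ∈ X^m to probability measures on Θ and be ε-differentially private, and let ℓ : Θ × X → ℝ be measurable with 0 ≤ ℓ(θ,x) ≤ 1 for all θ, x. Define F(S) = E_{θ~A(S)} [ (1/m)∑_{i=1}^m ℓ(θ, x_i) ]. Then F has the bounded-differences property: for all adjacent datasets S, S' ∈ X^m (differing in one entry), |F(S) − F(S')| ≤ (e^ε − 1) + 1/m. -/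
/-!
Insert the mixed term `∫ R_S d(A S')`, where `R_S θ = (1/m) ∑ ℓ(θ, x_i)` is the empirical risk.
Changing the measure from `A S` to `A S'` costs at most `e^ε − 1`: the integrand lies in `[0, 1]`
and `A S ≤ e^ε • A S'`, so `∫ R_S d(A S) ≤ e^ε ∫ R_S d(A S')`. Changing the dataset from `S` to `S'`
replaces one of `m` terms in `[0, 1]`, which moves the integrand by at most `1/m` pointwise.
-/

open MeasureTheory Real

section Integral

variable {Θ : Type*} [MeasurableSpace Θ] {μ ν : Measure Θ} {f g : Θ → ℝ}

theorem integral_sub_integral_le_of_le_smul [IsProbabilityMeasure μ] [IsProbabilityMeasure ν]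
    {c B : ℝ} (hμν : μ ≤ ENNReal.ofReal c • ν) (hf : AEStronglyMeasurable f ν)
    (hf0 : ∀ θ, 0 ≤ f θ) (hfB : ∀ θ, f θ ≤ B) :
    ∫ θ, f θ ∂μ - ∫ θ, f θ ∂ν ≤ (c - 1) * B := by
  have hc : 1 ≤ c := by
    simpa [ENNReal.one_le_ofReal] using hμν Set.univ
  have hfν : Integrable f ν :=
    .of_bound hf B (ae_of_all _ fun θ => by simpa [abs_of_nonneg (hf0 θ)] using hfB θ)
  have hμ : ∫ θ, f θ ∂μ ≤ c * ∫ θ, f θ ∂ν := calc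
    ∫ θ, f θ ∂μ ≤ ∫ θ, f θ ∂(ENNReal.ofReal c • ν) :=
      integral_mono_measure hμν (ae_of_all _ hf0) (hfν.smul_measure ENNReal.ofReal_ne_top)
    _ = c * ∫ θ, f θ ∂ν := by
      rw [integral_smul_measure, ENNReal.toReal_ofReal (by linarith), smul_eq_mul]
  have hνB : ∫ θ, f θ ∂ν ≤ B := by
    simpa using integral_mono hfν (integrable_const B) hfB
  nlinarith [integral_nonneg (μ := ν) (f := f) hf0]

theorem abs_integral_sub_integral_le [IsProbabilityMeasure μ] {C : ℝ}
    (hf : Integrable f μ) (hg : Integrable g μ) (hfg : ∀ θ, |f θ - g θ| ≤ C) :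
    |∫ θ, f θ ∂μ - ∫ θ, g θ ∂μ| ≤ C := by
  rw [← integral_sub hf hg]
  simpa using norm_integral_le_of_norm_le_const (μ := μ) (f := fun θ => f θ - g θ)
    (ae_of_all _ hfg)

end Integral

section EmpiricalRisk

variable {X Θ : Type*} {m : ℕ} {ℓ : Θ → X → ℝ}

noncomputable def empiricalRisk (ℓ : Θ → X → ℝ) (S : Fin m → X) (θ : Θ) : ℝ :=
  (m : ℝ)⁻¹ * ∑ i, ℓ θ (S i)

theorem empiricalRisk_nonneg (h0 : ∀ θ x, 0 ≤ ℓ θ x) (S : Fin m → X) (θ : Θ) :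
    0 ≤ empiricalRisk ℓ S θ :=
  mul_nonneg (by positivity) (Finset.sum_nonneg fun i _ => h0 θ (S i))

theorem empiricalRisk_le_one (h1 : ∀ θ x, ℓ θ x ≤ 1) (S : Fin m → X) (θ : Θ) :
    empiricalRisk ℓ S θ ≤ 1 := calc
  empiricalRisk ℓ S θ ≤ (m : ℝ)⁻¹ * m :=
    mul_le_mul_of_nonneg_left
      ((Finset.sum_le_sum fun i _ => h1 θ (S i)).trans_eq (by simp)) (by positivity)
  _ ≤ 1 := inv_mul_le_one_of_le₀ le_rfl (Nat.cast_nonneg m)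

theorem abs_empiricalRisk_sub_le {S S' : Fin m → X} (hS : Adjacent S S')
    (h0 : ∀ θ x, 0 ≤ ℓ θ x) (h1 : ∀ θ x, ℓ θ x ≤ 1) (θ : Θ) :
    |empiricalRisk ℓ S θ - empiricalRisk ℓ S' θ| ≤ (m : ℝ)⁻¹ := by
  obtain ⟨i, hi⟩ := hS
  have hsum : ∑ j, (ℓ θ (S j) - ℓ θ (S' j)) = ℓ θ (S i) - ℓ θ (S' i) :=
    Finset.sum_eq_single i (fun j _ hj => by rw [hi j hj, sub_self])
      (fun h => absurd (Finset.mem_univ i) h)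
  rw [empiricalRisk, empiricalRisk, ← mul_sub, ← Finset.sum_sub_distrib, hsum, abs_mul,
    abs_of_nonneg (by positivity)]
  exact mul_le_of_le_one_right (by positivity)
    (abs_sub_le_of_nonneg_of_le (h0 _ _) (h1 _ _) (h0 _ _) (h1 _ _))

variable [MeasurableSpace X] [MeasurableSpace Θ]

theorem measurable_empiricalRisk (hℓ : Measurable (Function.uncurry ℓ)) (S : Fin m → X) :
    Measurable (empiricalRisk ℓ S) :=
  (Finset.measurable_sum _ fun _ _ => hℓ.of_uncurry_right).const_mul _

theorem integrable_empiricalRisk {μ : Measure Θ} [IsFiniteMeasure μ]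
    (hℓ : Measurable (Function.uncurry ℓ)) (h0 : ∀ θ x, 0 ≤ ℓ θ x) (h1 : ∀ θ x, ℓ θ x ≤ 1)
    (S : Fin m → X) : Integrable (empiricalRisk ℓ S) μ :=
  .of_bound (measurable_empiricalRisk hℓ S).aestronglyMeasurable 1 (ae_of_all _ fun θ => by
    rw [Real.norm_of_nonneg (empiricalRisk_nonneg h0 S θ)]
    exact empiricalRisk_le_one h1 S θ)

end EmpiricalRisk

theorem dp_bounded_differences_general {X Θ : Type*} [MeasurableSpace X] [MeasurableSpace Θ]
    {m : ℕ}
    (A : (Fin m → X) → Measure Θ) (hprob : ∀ S, IsProbabilityMeasure (A S))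
    (ε : ℝ)
    (hdp : ∀ S S' : Fin m → X, Adjacent S S' → ∀ O : Set Θ, MeasurableSet O →
      A S O ≤ ENNReal.ofReal (exp ε) * A S' O)
    (ℓ : Θ → X → ℝ) (hmeas : Measurable (Function.uncurry ℓ))
    (h0 : ∀ θ x, 0 ≤ ℓ θ x) (h1 : ∀ θ x, ℓ θ x ≤ 1) :
    ∀ S S' : Fin m → X, Adjacent S S' →
      |(∫ θ, (m : ℝ)⁻¹ * ∑ i : Fin m, ℓ θ (S i) ∂(A S)) -
        ∫ θ, (m : ℝ)⁻¹ * ∑ i : Fin m, ℓ θ (S' i) ∂(A S')| ≤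
        (exp ε - 1) + (m : ℝ)⁻¹ := by
  intro S S' hSS'
  have hA : ∀ T T', Adjacent T T' → A T ≤ ENNReal.ofReal (exp ε) • A T' := fun T T' hT =>
    Measure.le_iff.2 fun O hO => by simpa using hdp T T' hT O hO
  have hR : ∀ T T', Adjacent T T' →
      ∫ θ, empiricalRisk ℓ S θ ∂(A T) - ∫ θ, empiricalRisk ℓ S θ ∂(A T') ≤ exp ε - 1 :=
    fun T T' hT => by
      have := hprob T
      have := hprob T'
      simpa using integral_sub_integral_le_of_le_smul (hA T T' hT)
        (measurable_empiricalRisk hmeas S).aestronglyMeasurable (empiricalRisk_nonneg h0 S)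
        (empiricalRisk_le_one h1 S)
  calc |∫ θ, empiricalRisk ℓ S θ ∂(A S) - ∫ θ, empiricalRisk ℓ S' θ ∂(A S')|
      ≤ |∫ θ, empiricalRisk ℓ S θ ∂(A S) - ∫ θ, empiricalRisk ℓ S θ ∂(A S')|
        + |∫ θ, empiricalRisk ℓ S θ ∂(A S') - ∫ θ, empiricalRisk ℓ S' θ ∂(A S')| :=
      abs_sub_le _ _ _
    _ ≤ (exp ε - 1) + (m : ℝ)⁻¹ := by
      have := hprob S'
      gcongr
      · exact abs_sub_le_iff.2 ⟨hR S S' hSS', hR S' S hSS'.symm⟩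
      · exact abs_integral_sub_integral_le (integrable_empiricalRisk hmeas h0 h1 S)
          (integrable_empiricalRisk hmeas h0 h1 S') (abs_empiricalRisk_sub_le hSS' h0 h1)

/-- bounded differences of the averaged empirical loss under DP: if `A`
is ε-differentially private and `0 ≤ ℓ ≤ 1`, then
`F(S) = E_{θ~A(S)} [(1/m) ∑_i ℓ(θ, x_i)]` satisfies
`|F(S) − F(S')| ≤ (e^ε − 1) + 1/m` for all adjacent `S, S'`. -/
theorem dp_bounded_differences {X Θ : Type*} [MeasurableSpace X] [MeasurableSpace Θ]
    {m : ℕ} (hm : 0 < m)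
    (A : (Fin m → X) → Measure Θ) (hprob : ∀ S, IsProbabilityMeasure (A S))
    (ε : ℝ) (hε : 0 ≤ ε)
    (hdp : ∀ S S' : Fin m → X, Adjacent S S' → ∀ O : Set Θ, MeasurableSet O →
      A S O ≤ ENNReal.ofReal (exp ε) * A S' O)
    (ℓ : Θ → X → ℝ) (hmeas : Measurable (Function.uncurry ℓ))
    (h0 : ∀ θ x, 0 ≤ ℓ θ x) (h1 : ∀ θ x, ℓ θ x ≤ 1) :
    ∀ S S' : Fin m → X, Adjacent S S' →
      |(∫ θ, (m : ℝ)⁻¹ * ∑ i : Fin m, ℓ θ (S i) ∂(A S)) -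
        ∫ θ, (m : ℝ)⁻¹ * ∑ i : Fin m, ℓ θ (S' i) ∂(A S')| ≤
        (exp ε - 1) + (m : ℝ)⁻¹ :=
  dp_bounded_differences_general A hprob ε hdp ℓ hmeas h0 h1
end

section
/- Let p be a probability measure on X, let A map datasets S ∈ X^m to probability measures on Θ (measurably in S) and be ε-differentially private, and let ℓ : Θ × X → ℝ be measurable with 0 ≤ ℓ(θ,x) ≤ 1. Define F(S) = E_{θ~A(S)} [ (1/m)∑_{i=1}^m ℓ(θ, x_i) ]. Then for every t > 0, P_{S~p^m}( |F(S) − E_{S'~p^m}[F(S')]| ≥ t ) ≤ 2·exp( −2t² / ( m·((e^ε − 1) + 1/m)² ) ). -/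
open MeasureTheory ProbabilityTheory Real

/-- Core analytic inequality for Hoeffding's lemma. -/
lemma hoeffding_core {q : ℝ} (hq0 : 0 ≤ q) (hq1 : q ≤ 1) (h : ℝ) :
    1 - q + q * exp h ≤ exp (q * h + h ^ 2 / 8) := by
  have hgpos : ∀ x : ℝ, 0 < 1 - q + q * exp x := by
    intro x
    rcases eq_or_lt_of_le hq1 with h1 | h1
    · have : q * exp x > 0 := by positivity
      nlinarith
    · nlinarith [exp_pos x, mul_nonneg hq0 (exp_pos x).le]
  set g : ℝ → ℝ := fun x => 1 - q + q * exp x with hg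
  set D : ℝ → ℝ := fun x => q * x + x ^ 2 / 8 - log (g x) with hD
  set D1 : ℝ → ℝ := fun x => q + x / 4 - q * exp x / g x with hD1
  have hder : ∀ x, HasDerivAt D (D1 x) x := by
    intro x
    have hgd : HasDerivAt g (q * exp x) x := by
      exact ((Real.hasDerivAt_exp x).const_mul q).const_add (1 - q)
    have hlog : HasDerivAt (fun y => log (g y)) (q * exp x / g x) x :=
      hgd.log (hgpos x).ne'
    have h1 : HasDerivAt (fun y : ℝ => q * y + y ^ 2 / 8) (q + x / 4) x := by
      have := ((hasDerivAt_pow 2 x).div_const 8).const_add 0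
      have h2 : HasDerivAt (fun y : ℝ => q * y) q x := by
        simpa using (hasDerivAt_id x).const_mul q
      exact (h2.add ((hasDerivAt_pow 2 x).div_const 8)).congr_deriv (by ring)
    exact h1.sub hlog
  have hder1 : ∀ x, HasDerivAt D1 (1 / 4 - q * exp x * (1 - q) / (g x) ^ 2) x := by
    intro x
    have hgd : HasDerivAt g (q * exp x) x := by
      exact ((Real.hasDerivAt_exp x).const_mul q).const_add (1 - q)
    have hnum : HasDerivAt (fun y => q * exp y) (q * exp x) x :=
      (Real.hasDerivAt_exp x).const_mul q
    have hquot : HasDerivAt (fun y => q * exp y / g y)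
        ((q * exp x * g x - q * exp x * (q * exp x)) / (g x) ^ 2) x :=
      hnum.div hgd (hgpos x).ne'
    have hlin : HasDerivAt (fun y : ℝ => q + y / 4) (1 / 4) x := by
      simpa using ((hasDerivAt_id x).div_const 4).const_add q
    have := hlin.sub hquot
    have hgx := (hgpos x).ne'
    have hgeq : g x = 1 - q + q * exp x := rfl
    have hnum' : q * exp x * g x - q * exp x * (q * exp x) = q * exp x * (1 - q) := by
      rw [hgeq]; ring
    rw [hnum'] at this
    exact this
  have hD1deriv : deriv D1 = fun x => 1 / 4 - q * exp x * (1 - q) / (g x) ^ 2 := by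
    funext x; exact (hder1 x).deriv
  have hD1mono : Monotone D1 := by
    apply monotone_of_deriv_nonneg (fun x => (hder1 x).differentiableAt)
    intro x
    rw [hD1deriv]
    have hgx := hgpos x
    have hgeq : g x = 1 - q + q * exp x := rfl
    rw [sub_nonneg, hgeq, div_le_iff₀ (by positivity)]
    nlinarith [sq_nonneg (q * exp x - (1 - q))]
  have hD10 : D1 0 = 0 := by simp [hD1, hg]
  have hD0 : D 0 = 0 := by simp [hD, hg]
  have hDnonneg : ∀ x, 0 ≤ D x := by
    intro x
    rcases le_total 0 x with hx | hx
    · have hmono : MonotoneOn D (Set.Ici 0) := by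
        apply monotoneOn_of_deriv_nonneg (convex_Ici 0)
          (fun y _ => ((hder y).continuousAt.continuousWithinAt))
          (fun y _ => ((hder y).differentiableAt.differentiableWithinAt))
        intro y hy
        rw [(hder y).deriv]
        have : D1 0 ≤ D1 y := hD1mono (le_of_lt (by simpa using hy))
        linarith [hD10 ▸ this]
      have := hmono (Set.mem_Ici.mpr le_rfl) (Set.mem_Ici.mpr hx) hx
      linarith [hD0 ▸ this]
    · have hmono : AntitoneOn D (Set.Iic 0) := by
        apply antitoneOn_of_deriv_nonpos (convex_Iic 0)
          (fun y _ => ((hder y).continuousAt.continuousWithinAt))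
          (fun y _ => ((hder y).differentiableAt.differentiableWithinAt))
        intro y hy
        rw [(hder y).deriv]
        have : D1 y ≤ D1 0 := hD1mono (le_of_lt (by simpa using hy))
        linarith [hD10 ▸ this]
      have := hmono (Set.mem_Iic.mpr hx) (Set.mem_Iic.mpr le_rfl) hx
      linarith [hD0 ▸ this]
  have := hDnonneg h
  have hlog : log (g h) ≤ q * h + h ^ 2 / 8 := by simpa [hD] using this
  calc g h = exp (log (g h)) := (exp_log (hgpos h)).symm
    _ ≤ exp (q * h + h ^ 2 / 8) := exp_le_exp.mpr hlog

/-- Hoeffding's lemma. -/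
lemma hoeffding_lemma {α : Type*} [MeasurableSpace α] (μ : Measure α) [IsProbabilityMeasure μ]
    (f : α → ℝ) (hf : Measurable f) (a b : ℝ) (ha : ∀ x, a ≤ f x) (hb : ∀ x, f x ≤ b)
    (hmean : ∫ x, f x ∂μ = 0) (t : ℝ) :
    ∫ x, exp (t * f x) ∂μ ≤ exp (t ^ 2 * (b - a) ^ 2 / 8) := by
  -- integrability of f
  have hfi : Integrable f μ := by
    refine Integrable.mono' (integrable_const (max |a| |b|)) hf.aestronglyMeasurable ?_
    filter_upwards with x
    rw [Real.norm_eq_abs, abs_le]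
    constructor
    · exact le_trans (neg_le_neg (le_max_left _ _)) (le_trans (neg_abs_le a) (ha x))
    · exact le_trans (hb x) (le_trans (le_abs_self b) (le_max_right _ _))
  have ha0 : a ≤ 0 := by
    have : ∫ x, a ∂μ ≤ ∫ x, f x ∂μ := integral_mono (integrable_const a) hfi ha
    simpa [hmean] using this
  have hb0 : 0 ≤ b := by
    have : ∫ x, f x ∂μ ≤ ∫ x, b ∂μ := integral_mono hfi (integrable_const b) hb
    simpa [hmean] using this
  have hexpi : Integrable (fun x => exp (t * f x)) μ := by
    refine Integrable.mono' (integrable_const (exp (|t| * max |a| |b|)))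
      ((hf.const_mul t).exp.aestronglyMeasurable) ?_
    filter_upwards with x
    rw [Real.norm_eq_abs, abs_of_nonneg (exp_pos _).le, exp_le_exp]
    calc t * f x ≤ |t * f x| := le_abs_self _
      _ = |t| * |f x| := abs_mul _ _
      _ ≤ |t| * max |a| |b| := by
          apply mul_le_mul_of_nonneg_left _ (abs_nonneg t)
          rw [abs_le]
          exact ⟨le_trans (neg_le_neg (le_max_left _ _)) (le_trans (neg_abs_le a) (ha x)),
            le_trans (hb x) (le_trans (le_abs_self b) (le_max_right _ _))⟩
  rcases eq_or_lt_of_le (sub_nonneg.mpr (le_trans ha0 hb0) : (0:ℝ) ≤ b - a) with hd | hd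
  · -- b = a, so a = b = 0 and f = 0
    have hab : a = b := by linarith [hd.symm ▸ (rfl : b - a = b - a)]
    have ha' : a = 0 := le_antisymm ha0 (hab ▸ hb0)
    have hf0 : ∀ x, f x = 0 := fun x =>
      le_antisymm (ha' ▸ hab ▸ hb x) (ha' ▸ ha x)
    simp only [hf0, mul_zero, exp_zero]
    rw [integral_const]
    simp [le_of_eq, exp_nonneg]
    positivity
  · set d := b - a with hdd
    set q := -a / d with hq
    have hq0 : 0 ≤ q := div_nonneg (neg_nonneg.mpr ha0) hd.le
    have hq1 : q ≤ 1 := by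
      rw [hq, div_le_one hd]
      linarith
    -- convexity pointwise bound
    have hpt : ∀ x, exp (t * f x) ≤ (b - f x) / d * exp (t * a) + (f x - a) / d * exp (t * b) := by
      intro x
      have h1 : (b - f x) / d + (f x - a) / d = 1 := by field_simp; rw [hdd]; ring
      have h2 : (0:ℝ) ≤ (b - f x) / d := div_nonneg (by linarith [hb x]) hd.le
      have h3 : (0:ℝ) ≤ (f x - a) / d := div_nonneg (by linarith [ha x]) hd.le
      have h4 : (b - f x) / d * (t * a) + (f x - a) / d * (t * b) = t * f x := by
        field_simp
        ring
      have := convexOn_exp.2 (Set.mem_univ (t * a)) (Set.mem_univ (t * b)) h2 h3 h1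
      rw [smul_eq_mul, smul_eq_mul, smul_eq_mul, smul_eq_mul, h4] at this
      exact this
    -- integrate
    have hint : ∫ x, exp (t * f x) ∂μ ≤ b / d * exp (t * a) + -a / d * exp (t * b) := by
      have hrhs : Integrable (fun x => (b - f x) / d * exp (t * a) + (f x - a) / d * exp (t * b)) μ := by
        apply Integrable.add
        · exact (((integrable_const b).sub hfi).div_const d).mul_const _
        · exact ((hfi.sub (integrable_const a)).div_const d).mul_const _
      calc ∫ x, exp (t * f x) ∂μ
          ≤ ∫ x, ((b - f x) / d * exp (t * a) + (f x - a) / d * exp (t * b)) ∂μ :=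
            integral_mono hexpi hrhs hpt
        _ = b / d * exp (t * a) + -a / d * exp (t * b) := by
            rw [integral_add, integral_mul_const, integral_mul_const]
            · congr 1
              · congr 1
                rw [integral_div, integral_sub (integrable_const b) hfi, hmean, integral_const]
                simp
              · congr 1
                rw [integral_div, integral_sub hfi (integrable_const a), hmean, integral_const]
                simp
            · exact (((integrable_const b).sub hfi).div_const d).mul_const _
            · exact ((hfi.sub (integrable_const a)).div_const d).mul_const _
    -- apply the core inequality with h = t * d
    have hcore := hoeffding_core hq0 hq1 (t * d)
    have key : b / d * exp (t * a) + -a / d * exp (t * b) ≤ exp (t ^ 2 * d ^ 2 / 8) := by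
      have hae : t * a = -q * (t * d) := by
        rw [hq]; field_simp
      have hbe : t * b = (1 - q) * (t * d) := by
        rw [hq]; field_simp; ring
      have hbd : b / d = 1 - q := by rw [hq]; field_simp; ring
      have had : -a / d = q := rfl
      rw [hae, hbe, hbd, had]
      have expand : (1 - q) * exp (-q * (t * d)) + q * exp ((1 - q) * (t * d))
          = exp (-(q * (t * d))) * (1 - q + q * exp (t * d)) := by
        have e1 : exp ((1 - q) * (t * d)) = exp (-(q * (t * d))) * exp (t * d) := by
          rw [← exp_add]; ring_nf
        rw [e1]; ring
      rw [expand]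
      calc exp (-(q * (t * d))) * (1 - q + q * exp (t * d))
          ≤ exp (-(q * (t * d))) * exp (q * (t * d) + (t * d) ^ 2 / 8) := by
            apply mul_le_mul_of_nonneg_left hcore (exp_pos _).le
        _ = exp (t ^ 2 * d ^ 2 / 8) := by rw [← exp_add]; ring_nf
    exact le_trans hint key

/-- Integrability of bounded measurable functions on a finite measure space. -/
lemma integrable_of_bounds {α : Type*} [MeasurableSpace α] (μ : Measure α) [IsFiniteMeasure μ]
    {f : α → ℝ} (hf : Measurable f) {C : ℝ} (hC : ∀ x, |f x| ≤ C) : Integrable f μ := by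
  refine Integrable.mono' (integrable_const C) hf.aestronglyMeasurable ?_
  filter_upwards with x
  simpa [Real.norm_eq_abs] using hC x

lemma exp_mul_le_exp_abs {t x : ℝ} (hx : |x| ≤ 1) : exp (t * x) ≤ exp |t| := by
  rw [exp_le_exp]
  calc t * x ≤ |t * x| := le_abs_self _
    _ = |t| * |x| := abs_mul _ _
    _ ≤ |t| * 1 := mul_le_mul_of_nonneg_left hx (abs_nonneg t)
    _ = |t| := mul_one _

/-- Oscillation version of Hoeffding's lemma. -/
lemma hoeffding_osc {α : Type*} [MeasurableSpace α] [Nonempty α] (μ : Measure α)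
    [IsProbabilityMeasure μ] (f : α → ℝ) (hf : Measurable f) (c : ℝ)
    (hosc : ∀ x y, f x - f y ≤ c) (hmean : ∫ x, f x ∂μ = 0) (t : ℝ) :
    ∫ x, exp (t * f x) ∂μ ≤ exp (t ^ 2 * c ^ 2 / 8) := by
  obtain ⟨x₀⟩ := ‹Nonempty α›
  have hbdd : BddBelow (Set.range f) := ⟨f x₀ - c, by
    rintro _ ⟨y, rfl⟩
    linarith [hosc x₀ y]⟩
  set a := sInf (Set.range f) with ha
  have hlb : ∀ x, a ≤ f x := fun x => csInf_le hbdd ⟨x, rfl⟩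
  have hub : ∀ x, f x ≤ a + c := by
    intro x
    have : f x - c ≤ a := le_csInf ⟨f x₀, ⟨x₀, rfl⟩⟩ (by rintro _ ⟨y, rfl⟩; linarith [hosc x y])
    linarith
  have := hoeffding_lemma μ f hf a (a + c) hlb hub hmean t
  simpa using this

/-- MGF bound for functions with bounded differences over a product measure (McDiarmid). -/
lemma mcdiarmid_mgf {X : Type*} [MeasurableSpace X] (p : Measure X) [IsProbabilityMeasure p] :
    ∀ (m : ℕ) (c : ℝ), 0 ≤ c → ∀ f : (Fin m → X) → ℝ, Measurable f →
    (∀ S, 0 ≤ f S) → (∀ S, f S ≤ 1) →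
    (∀ S S', Adjacent S S' → f S - f S' ≤ c) → ∀ t : ℝ,
    ∫ S, exp (t * (f S - ∫ S', f S' ∂(Measure.pi fun _ : Fin m => p)))
        ∂(Measure.pi fun _ : Fin m => p)
      ≤ exp (t ^ 2 * m * c ^ 2 / 8) := by
  have hX : Nonempty X := by
    by_contra hX
    rw [not_nonempty_iff] at hX
    have h1 : p Set.univ = 1 := measure_univ
    rw [Set.univ_eq_empty_iff.mpr hX] at h1
    simp at h1
  intro m
  induction m with
  | zero =>
    intro c hc f hf h0 h1 hbd t
    have hconst : ∀ S : Fin 0 → X, f S = f default := fun S => by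
      congr 1; exact Subsingleton.elim _ _
    have hfc : f = fun _ => f default := funext hconst
    rw [hfc]
    simp
  | succ m ih =>
    intro c hc f hf h0 h1 hbd t
    set μm := Measure.pi (fun _ : Fin m => p) with hμm
    set μ := Measure.pi (fun _ : Fin (m + 1) => p) with hμ
    set e := MeasurableEquiv.piFinSuccAbove (fun _ : Fin (m + 1) => X) 0 with he
    have MP : MeasurePreserving e μ (p.prod μm) :=
      measurePreserving_piFinSuccAbove (fun _ : Fin (m + 1) => p) 0
    set g : X × (Fin m → X) → ℝ := fun z => f (e.symm z) with hg
    have hgm : Measurable g := hf.comp e.symm.measurable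
    have hg0 : ∀ z, 0 ≤ g z := fun z => h0 _
    have hg1 : ∀ z, g z ≤ 1 := fun z => h1 _
    -- adjacency transfer
    have hadj1 : ∀ (x : X) (y y' : Fin m → X), Adjacent y y' →
        g (x, y) - g (x, y') ≤ c := by
      rintro x y y' ⟨i, hi⟩
      apply hbd
      refine ⟨(0 : Fin (m + 1)).succAbove i, fun j hj => ?_⟩
      rcases eq_or_ne j 0 with rfl | hj0
      · show e.symm (x, y) 0 = e.symm (x, y') 0
        simp [he, MeasurableEquiv.piFinSuccAbove_symm_apply]
      · obtain ⟨k, rfl⟩ := Fin.exists_succAbove_eq hj0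
        have hki : k ≠ i := fun h => hj (by rw [h])
        show e.symm (x, y) _ = e.symm (x, y') _
        simp [he, MeasurableEquiv.piFinSuccAbove_symm_apply, hi k hki]
    have hadj2 : ∀ (x x' : X) (y : Fin m → X), g (x, y) - g (x', y) ≤ c := by
      intro x x' y
      apply hbd
      refine ⟨0, fun j hj => ?_⟩
      obtain ⟨k, rfl⟩ := Fin.exists_succAbove_eq hj
      show e.symm (x, y) _ = e.symm (x', y) _
      simp [he, MeasurableEquiv.piFinSuccAbove_symm_apply]
    -- conditional mean
    set h : (Fin m → X) → ℝ := fun y => ∫ x, g (x, y) ∂p with hh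
    have hhm : Measurable h :=
      (hgm.stronglyMeasurable.integral_prod_left').measurable
    have hh0 : ∀ y, 0 ≤ h y := fun y => integral_nonneg fun x => hg0 _
    have hh1 : ∀ y, h y ≤ 1 := by
      intro y
      calc ∫ x, g (x, y) ∂p ≤ ∫ _x, (1:ℝ) ∂p :=
            integral_mono (integrable_of_bounds p (hgm.comp (measurable_id.prodMk
              measurable_const)) (C := 1) (fun x => abs_le.mpr ⟨by linarith [hg0 (x,y)], hg1 _⟩))
              (integrable_const 1) (fun x => hg1 _)
        _ = 1 := by simp
    have hhbd : ∀ y y', Adjacent y y' → h y - h y' ≤ c := by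
      intro y y' hyy
      rw [hh]
      have hi1 : Integrable (fun x => g (x, y)) p :=
        integrable_of_bounds p (hgm.comp (measurable_id.prodMk measurable_const))
          (C := 1) (fun x => abs_le.mpr ⟨by linarith [hg0 (x,y)], hg1 _⟩)
      have hi2 : Integrable (fun x => g (x, y')) p :=
        integrable_of_bounds p (hgm.comp (measurable_id.prodMk measurable_const))
          (C := 1) (fun x => abs_le.mpr ⟨by linarith [hg0 (x,y')], hg1 _⟩)
      rw [← integral_sub hi1 hi2]
      calc ∫ x, (g (x, y) - g (x, y')) ∂p ≤ ∫ _x, c ∂p :=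
            integral_mono (hi1.sub hi2) (integrable_const c) (fun x => hadj1 x y y' hyy)
        _ = c := by simp
    -- mean of f equals mean over product, and equals mean of h
    set E := ∫ S', f S' ∂μ with hE
    have hgint : Integrable g (p.prod μm) :=
      integrable_of_bounds _ hgm (C := 1) (fun z => abs_le.mpr ⟨by linarith [hg0 z], hg1 z⟩)
    have hEg : E = ∫ z, g z ∂(p.prod μm) := by
      rw [hE, ← MP.integral_comp' g]
      congr 1
      funext S
      simp [hg]
    have hEh : E = ∫ y, h y ∂μm := by
      rw [hEg, integral_prod_symm g hgint]
    have hE0 : 0 ≤ E := hEg ▸ integral_nonneg fun z => hg0 z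
    have hE1 : E ≤ 1 := by
      rw [hEg]
      calc ∫ z, g z ∂(p.prod μm) ≤ ∫ _z, (1:ℝ) ∂(p.prod μm) :=
            integral_mono hgint (integrable_const 1) hg1
        _ = 1 := by simp
    -- main computation
    have hΦm : Measurable (fun z => exp (t * (g z - E))) :=
      (((hgm.sub measurable_const).const_mul t).exp)
    have hΦint : Integrable (fun z => exp (t * (g z - E))) (p.prod μm) := by
      refine integrable_of_bounds _ hΦm (C := exp |t|) (fun z => ?_)
      rw [abs_of_nonneg (exp_pos _).le]
      exact exp_mul_le_exp_abs (abs_le.mpr ⟨by linarith [hg0 z], by linarith [hg1 z]⟩)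
    have step1 : ∫ S, exp (t * (f S - E)) ∂μ = ∫ z, exp (t * (g z - E)) ∂(p.prod μm) := by
      rw [← MP.integral_comp' (fun z => exp (t * (g z - E)))]
      congr 1
      funext S
      simp [hg]
    have step2 : ∫ z, exp (t * (g z - E)) ∂(p.prod μm)
        = ∫ y, ∫ x, exp (t * (g (x, y) - E)) ∂p ∂μm :=
      integral_prod_symm _ hΦint
    -- inner bound
    have inner_bound : ∀ y, ∫ x, exp (t * (g (x, y) - E)) ∂p
        ≤ exp (t ^ 2 * c ^ 2 / 8) * exp (t * (h y - E)) := by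
      intro y
      have hsplit : ∀ x, exp (t * (g (x, y) - E))
          = exp (t * (h y - E)) * exp (t * (g (x, y) - h y)) := by
        intro x
        rw [← exp_add]
        ring_nf
      have hmeas1 : Measurable (fun x => g (x, y) - h y) :=
        (hgm.comp (measurable_id.prodMk measurable_const)).sub measurable_const
      have hmean1 : ∫ x, (g (x, y) - h y) ∂p = 0 := by
        have hi1 : Integrable (fun x => g (x, y)) p :=
          integrable_of_bounds p (hgm.comp (measurable_id.prodMk measurable_const))
            (C := 1) (fun x => abs_le.mpr ⟨by linarith [hg0 (x,y)], hg1 _⟩)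
        rw [integral_sub hi1 (integrable_const _), integral_const]
        simp [hh]
      have hosc1 : ∀ x x', (g (x, y) - h y) - (g (x', y) - h y) ≤ c := by
        intro x x'
        have := hadj2 x x' y
        linarith
      have hhoef := hoeffding_osc p (fun x => g (x, y) - h y) hmeas1 c hosc1 hmean1 t
      calc ∫ x, exp (t * (g (x, y) - E)) ∂p
          = ∫ x, exp (t * (h y - E)) * exp (t * (g (x, y) - h y)) ∂p := by
            congr 1; funext x; exact hsplit x
        _ = exp (t * (h y - E)) * ∫ x, exp (t * (g (x, y) - h y)) ∂p := integral_const_mul _ _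
        _ ≤ exp (t * (h y - E)) * exp (t ^ 2 * c ^ 2 / 8) :=
            mul_le_mul_of_nonneg_left hhoef (exp_pos _).le
        _ = exp (t ^ 2 * c ^ 2 / 8) * exp (t * (h y - E)) := mul_comm _ _
    -- outer bound
    have hIy_meas : Measurable (fun y => ∫ x, exp (t * (g (x, y) - E)) ∂p) :=
      (hΦm.stronglyMeasurable.integral_prod_left').measurable
    have hIy_int : Integrable (fun y => ∫ x, exp (t * (g (x, y) - E)) ∂p) μm := by
      refine integrable_of_bounds _ hIy_meas (C := exp |t|) (fun y => ?_)
      have : ‖∫ x, exp (t * (g (x, y) - E)) ∂p‖ ≤ exp |t| * (p Set.univ).toReal := by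
        apply norm_integral_le_of_norm_le_const (C := exp |t|)
        filter_upwards with x
        rw [Real.norm_eq_abs, abs_of_nonneg (exp_pos _).le]
        exact exp_mul_le_exp_abs (abs_le.mpr ⟨by linarith [hg0 (x, y)], by linarith [hg1 (x, y)]⟩)
      rw [measure_univ] at this
      simpa [Real.norm_eq_abs] using this
    have hJ_int : Integrable (fun y => exp (t ^ 2 * c ^ 2 / 8) * exp (t * (h y - E))) μm := by
      refine Integrable.const_mul ?_ _
      refine integrable_of_bounds _ (((hhm.sub measurable_const).const_mul t).exp)
        (C := exp |t|) (fun y => ?_)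
      rw [abs_of_nonneg (exp_pos _).le]
      exact exp_mul_le_exp_abs (abs_le.mpr ⟨by linarith [hh0 y], by linarith [hh1 y]⟩)
    have hIH := ih c hc h hhm hh0 hh1 hhbd t
    rw [← hEh] at hIH
    calc ∫ S, exp (t * (f S - E)) ∂μ
        = ∫ y, ∫ x, exp (t * (g (x, y) - E)) ∂p ∂μm := by rw [step1, step2]
      _ ≤ ∫ y, exp (t ^ 2 * c ^ 2 / 8) * exp (t * (h y - E)) ∂μm :=
          integral_mono hIy_int hJ_int inner_bound
      _ = exp (t ^ 2 * c ^ 2 / 8) * ∫ y, exp (t * (h y - E)) ∂μm := integral_const_mul _ _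
      _ ≤ exp (t ^ 2 * c ^ 2 / 8) * exp (t ^ 2 * (m : ℝ) * c ^ 2 / 8) :=
          mul_le_mul_of_nonneg_left hIH (exp_pos _).le
      _ = exp (t ^ 2 * ((m : ℕ) + 1 : ℕ) * c ^ 2 / 8) := by
          rw [← exp_add]
          congr 1
          push_cast
          ring

/-- concentration of the empirical discriminator loss under DP, the key
step of Theorem 2 of the paper: if `A` (a Markov kernel from datasets of size `m` to
parameters) is ε-differentially private and `0 ≤ ℓ ≤ 1`, then
`F(S) = E_{θ~A(S)} [(1/m) ∑_i ℓ(θ, x_i)]` concentrates around its mean over `S ~ p^m`: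
`P(|F(S) − E F| ≥ t) ≤ 2 exp(−2t² / (m ((e^ε − 1) + 1/m)²))`. -/
theorem dp_uniform_convergence_concentration {X Θ : Type*} [MeasurableSpace X]
    [MeasurableSpace Θ] (p : Measure X) [IsProbabilityMeasure p]
    {m : ℕ} (hm : 0 < m)
    (A : Kernel (Fin m → X) Θ) [IsMarkovKernel A]
    (ε : ℝ) (hε : 0 ≤ ε)
    (hdp : ∀ S S' : Fin m → X, Adjacent S S' → ∀ O : Set Θ, MeasurableSet O →
      A S O ≤ ENNReal.ofReal (exp ε) * A S' O)
    (ℓ : Θ → X → ℝ) (hmeas : Measurable (Function.uncurry ℓ))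
    (h0 : ∀ θ x, 0 ≤ ℓ θ x) (h1 : ∀ θ x, ℓ θ x ≤ 1)
    (F : (Fin m → X) → ℝ)
    (hF : ∀ S, F S = ∫ θ, (m : ℝ)⁻¹ * ∑ i : Fin m, ℓ θ (S i) ∂(A S))
    (t : ℝ) (ht : 0 < t) :
    (Measure.pi fun _ : Fin m => p)
        {S | t ≤ |F S - ∫ S', F S' ∂(Measure.pi fun _ : Fin m => p)|}
      ≤ ENNReal.ofReal
          (2 * exp (-2 * t ^ 2 / ((m : ℝ) * ((exp ε - 1) + (m : ℝ)⁻¹) ^ 2))) := by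
  set μ := Measure.pi (fun _ : Fin m => p) with hμ
  set G : (Fin m → X) → Θ → ℝ := fun S θ => (m : ℝ)⁻¹ * ∑ i : Fin m, ℓ θ (S i) with hG
  have hmR : (0:ℝ) < m := Nat.cast_pos.mpr hm
  -- bounds on G
  have hG0 : ∀ S θ, 0 ≤ G S θ := fun S θ =>
    mul_nonneg (by positivity) (Finset.sum_nonneg fun i _ => h0 θ (S i))
  have hG1 : ∀ S θ, G S θ ≤ 1 := by
    intro S θ
    have hsum : ∑ i : Fin m, ℓ θ (S i) ≤ (m : ℝ) := by
      calc ∑ i : Fin m, ℓ θ (S i) ≤ ∑ _i : Fin m, (1:ℝ) :=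
            Finset.sum_le_sum fun i _ => h1 θ (S i)
        _ = (m : ℝ) := by simp
    calc G S θ ≤ (m : ℝ)⁻¹ * (m : ℝ) := by
          exact mul_le_mul_of_nonneg_left hsum (by positivity)
      _ = 1 := inv_mul_cancel₀ hmR.ne'
  -- G measurable in θ for fixed S
  have hGmeas : ∀ S, Measurable (G S) := by
    intro S
    apply Measurable.const_mul
    apply Finset.measurable_sum
    intro i _
    exact hmeas.comp (measurable_id.prodMk measurable_const)
  have hGint : ∀ S S', Integrable (G S) (A S') := fun S S' =>
    integrable_of_bounds _ (hGmeas S) (C := 1)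
      (fun θ => abs_le.mpr ⟨by linarith [hG0 S θ], hG1 S θ⟩)
  -- F measurable
  have hFmeas : Measurable F := by
    have : F = fun S => ∫ θ, G S θ ∂(A S) := funext hF
    rw [this]
    have hGS : StronglyMeasurable (fun q : (Fin m → X) × Θ => G q.1 q.2) := by
      apply Measurable.stronglyMeasurable
      apply Measurable.const_mul
      apply Finset.measurable_sum
      intro i _
      exact hmeas.comp (measurable_snd.prodMk ((measurable_pi_apply i).comp measurable_fst))
    exact (hGS.integral_kernel_prod_right').measurable
  have hF0 : ∀ S, 0 ≤ F S := by
    intro S; rw [hF S]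
    exact integral_nonneg fun θ => hG0 S θ
  have hF1 : ∀ S, F S ≤ 1 := by
    intro S; rw [hF S]
    calc ∫ θ, G S θ ∂(A S) ≤ ∫ _θ, (1:ℝ) ∂(A S) :=
          integral_mono (hGint S S) (integrable_const 1) (hG1 S)
      _ = 1 := by simp
  -- bounded differences of F
  set c : ℝ := (exp ε - 1) + (m : ℝ)⁻¹ with hc
  have hexpε : 1 ≤ exp ε := by
    calc (1:ℝ) = exp 0 := (exp_zero).symm
      _ ≤ exp ε := exp_le_exp.mpr hε
  have hcpos : 0 < c := by
    have : 0 < (m:ℝ)⁻¹ := by positivity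
    rw [hc]; linarith
  have hbd : ∀ S S', Adjacent S S' → F S - F S' ≤ c := by
    intro S S' hadj
    -- pointwise difference of G
    have hGdiff : ∀ θ, G S θ - G S' θ ≤ (m : ℝ)⁻¹ := by
      intro θ
      obtain ⟨i, hi⟩ := hadj
      have : ∑ j : Fin m, ℓ θ (S j) - ∑ j : Fin m, ℓ θ (S' j)
          = ℓ θ (S i) - ℓ θ (S' i) := by
        rw [← Finset.sum_sub_distrib]
        rw [Finset.sum_eq_single i]
        · intro j _ hj
          rw [hi j hj]; ring
        · intro hj; exact absurd (Finset.mem_univ i) hj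
      have hdiff1 : ℓ θ (S i) - ℓ θ (S' i) ≤ 1 := by
        linarith [h1 θ (S i), h0 θ (S' i)]
      calc G S θ - G S' θ = (m:ℝ)⁻¹ * (∑ j : Fin m, ℓ θ (S j) - ∑ j : Fin m, ℓ θ (S' j)) := by
            rw [hG]; ring
        _ = (m:ℝ)⁻¹ * (ℓ θ (S i) - ℓ θ (S' i)) := by rw [this]
        _ ≤ (m:ℝ)⁻¹ * 1 := mul_le_mul_of_nonneg_left hdiff1 (by positivity)
        _ = (m:ℝ)⁻¹ := mul_one _
    -- DP measure comparison
    have hle : A S ≤ (ENNReal.ofReal (exp ε)) • (A S') := by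
      rw [Measure.le_iff]
      intro s hs
      simpa using hdp S S' hadj s hs
    have hkey : F S ≤ exp ε * ∫ θ, G S θ ∂(A S') := by
      rw [hF S]
      have := integral_mono_measure hle
        (Filter.Eventually.of_forall (fun θ => hG0 S θ))
        ((hGint S S').smul_measure (by simp : ENNReal.ofReal (exp ε) ≠ ⊤))
      rw [integral_smul_measure, ENNReal.toReal_ofReal (exp_pos ε).le, smul_eq_mul] at this
      exact this
    have hI0 : 0 ≤ ∫ θ, G S θ ∂(A S') := integral_nonneg fun θ => hG0 S θ
    have hI1 : ∫ θ, G S θ ∂(A S') ≤ 1 := by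
      calc ∫ θ, G S θ ∂(A S') ≤ ∫ _θ, (1:ℝ) ∂(A S') :=
            integral_mono (hGint S S') (integrable_const 1) (hG1 S)
        _ = 1 := by simp
    have hdsum : ∫ θ, G S θ ∂(A S') - F S' ≤ (m:ℝ)⁻¹ := by
      rw [hF S', ← integral_sub (hGint S S') (hGint S' S')]
      calc ∫ θ, (G S θ - G S' θ) ∂(A S') ≤ ∫ _θ, (m:ℝ)⁻¹ ∂(A S') :=
            integral_mono ((hGint S S').sub (hGint S' S')) (integrable_const _)
              (fun θ => hGdiff θ)
        _ = (m:ℝ)⁻¹ := by simp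
    calc F S - F S' ≤ exp ε * ∫ θ, G S θ ∂(A S') - F S' := by linarith
      _ = (exp ε - 1) * (∫ θ, G S θ ∂(A S')) + ((∫ θ, G S θ ∂(A S')) - F S') := by ring
      _ ≤ (exp ε - 1) * 1 + (m:ℝ)⁻¹ := by
          have h1' : (exp ε - 1) * (∫ θ, G S θ ∂(A S')) ≤ (exp ε - 1) * 1 :=
            mul_le_mul_of_nonneg_left hI1 (by linarith)
          linarith
      _ = c := by rw [hc]; ring
  -- Chernoff
  set E := ∫ S', F S' ∂μ with hE
  have hE0 : 0 ≤ E := integral_nonneg fun S => hF0 S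
  have hE1 : E ≤ 1 := by
    rw [hE]
    calc ∫ S', F S' ∂μ ≤ ∫ _S', (1:ℝ) ∂μ :=
          integral_mono (integrable_of_bounds _ hFmeas (C := 1)
            (fun S => abs_le.mpr ⟨by linarith [hF0 S], hF1 S⟩)) (integrable_const 1) hF1
      _ = 1 := by simp
  set lam := 4 * t / ((m:ℝ) * c ^ 2) with hlam
  have hlam0 : 0 ≤ lam := by positivity
  have harith : -lam * t + lam ^ 2 * (m:ℝ) * c ^ 2 / 8 = -2 * t ^ 2 / ((m:ℝ) * c ^ 2) := by
    rw [hlam]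
    field_simp
    ring
  have hmgf_int : ∀ (Y : (Fin m → X) → ℝ), Measurable Y → (∀ S, |Y S| ≤ 1) → ∀ r : ℝ,
      Integrable (fun S => exp (r * Y S)) μ := by
    intro Y hY hYb r
    refine integrable_of_bounds _ ((hY.const_mul r).exp) (C := exp |r|) (fun S => ?_)
    rw [abs_of_nonneg (exp_pos _).le]
    exact exp_mul_le_exp_abs (hYb S)
  have habs : ∀ S, |F S - E| ≤ 1 := fun S =>
    abs_le.mpr ⟨by linarith [hF0 S], by linarith [hF1 S]⟩
  -- upper tail
  have hup : (μ {S | t ≤ F S - E}).toReal ≤ exp (-2 * t ^ 2 / ((m:ℝ) * c ^ 2)) := by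
    have hint := hmgf_int (fun S => F S - E) (hFmeas.sub measurable_const) habs lam
    have h := measure_ge_le_exp_mul_mgf (μ := μ) (X := fun S => F S - E) t hlam0 hint
    have hmgf : mgf (fun S => F S - E) μ lam ≤ exp (lam ^ 2 * (m:ℝ) * c ^ 2 / 8) := by
      have := mcdiarmid_mgf p m c hcpos.le F hFmeas hF0 hF1 hbd lam
      rw [← hμ, ← hE] at this
      simpa [mgf] using this
    calc (μ {S | t ≤ F S - E}).toReal ≤ exp (-lam * t) * mgf (fun S => F S - E) μ lam := h
      _ ≤ exp (-lam * t) * exp (lam ^ 2 * (m:ℝ) * c ^ 2 / 8) :=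
          mul_le_mul_of_nonneg_left hmgf (exp_pos _).le
      _ = exp (-2 * t ^ 2 / ((m:ℝ) * c ^ 2)) := by rw [← exp_add, ← harith]
  -- lower tail
  have hdown : (μ {S | t ≤ E - F S}).toReal ≤ exp (-2 * t ^ 2 / ((m:ℝ) * c ^ 2)) := by
    have habs' : ∀ S, |E - F S| ≤ 1 := fun S => by
      rw [abs_sub_comm]; exact habs S
    have hint := hmgf_int (fun S => E - F S) (measurable_const.sub hFmeas) habs' lam
    have h := measure_ge_le_exp_mul_mgf (μ := μ) (X := fun S => E - F S) t hlam0 hint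
    have hmgf : mgf (fun S => E - F S) μ lam ≤ exp (lam ^ 2 * (m:ℝ) * c ^ 2 / 8) := by
      have := mcdiarmid_mgf p m c hcpos.le F hFmeas hF0 hF1 hbd (-lam)
      rw [← hμ, ← hE] at this
      have heq : (fun S => exp (lam * (E - F S))) = fun S => exp (-lam * (F S - E)) := by
        funext S; ring_nf
      rw [mgf]
      calc ∫ S, exp (lam * (E - F S)) ∂μ = ∫ S, exp (-lam * (F S - E)) ∂μ := by rw [heq]
        _ ≤ exp ((-lam) ^ 2 * (m:ℝ) * c ^ 2 / 8) := this
        _ = exp (lam ^ 2 * (m:ℝ) * c ^ 2 / 8) := by rw [neg_sq]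
    calc (μ {S | t ≤ E - F S}).toReal ≤ exp (-lam * t) * mgf (fun S => E - F S) μ lam := h
      _ ≤ exp (-lam * t) * exp (lam ^ 2 * (m:ℝ) * c ^ 2 / 8) :=
          mul_le_mul_of_nonneg_left hmgf (exp_pos _).le
      _ = exp (-2 * t ^ 2 / ((m:ℝ) * c ^ 2)) := by rw [← exp_add, ← harith]
  -- union bound
  have hsub : {S | t ≤ |F S - E|} ⊆ {S | t ≤ F S - E} ∪ {S | t ≤ E - F S} := by
    intro S hS
    rcases abs_cases (F S - E) with ⟨heq, _⟩ | ⟨heq, _⟩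
    · left; simpa [heq] using hS
    · right
      simp only [Set.mem_setOf_eq] at hS ⊢
      rw [heq] at hS
      linarith
  calc μ {S | t ≤ |F S - E|}
      ≤ μ ({S | t ≤ F S - E} ∪ {S | t ≤ E - F S}) := measure_mono hsub
    _ ≤ μ {S | t ≤ F S - E} + μ {S | t ≤ E - F S} := measure_union_le _ _
    _ ≤ ENNReal.ofReal (exp (-2 * t ^ 2 / ((m:ℝ) * c ^ 2)))
        + ENNReal.ofReal (exp (-2 * t ^ 2 / ((m:ℝ) * c ^ 2))) := by
        gcongr
        · rw [← ENNReal.ofReal_toReal (measure_ne_top μ _)]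
          exact ENNReal.ofReal_le_ofReal hup
        · rw [← ENNReal.ofReal_toReal (measure_ne_top μ _)]
          exact ENNReal.ofReal_le_ofReal hdown
    _ = ENNReal.ofReal (2 * exp (-2 * t ^ 2 / ((m:ℝ) * c ^ 2))) := by
        rw [← ENNReal.ofReal_add (exp_pos _).le (exp_pos _).le]
        congr 1
        ring
end
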